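/- arXiv:2501.13374 — 2 statements merged into one kernel-verified Lean document; each statement's English description precedes it below -/
import Mathlib

section
/- For n ≥ 1, the number of vectors v ∈ ℝ^n that are simultaneously the vector of a permutation of {1,…,n} and the Loday vector M_n(t) of some full binary tree t with n+1 leaves equals 2^{n−1}. -/
/-- Full binary trees: every internal vertex has exactly two children. -/
inductive BTree : Type
  | leaf : BTree
  | node : BTree → BTree → BTree

/-- Number of leaves of a full binary tree. -/
def BTree.leaves : BTree → ℕ
  | .leaf => 1
  | .node l r => l.leaves + r.leaves

/-- The list of weights `a_i * b_i` of the internal vertices of `t`, in left-to-right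
(infix) order: the `i`-th entry corresponds to the internal vertex between leaves `i-1` and `i`. -/
def BTree.loday : BTree → List ℕ
  | .leaf => []
  | .node l r => l.loday ++ (l.leaves * r.leaves) :: r.loday

/-- Loday's vector `M_n(t) ∈ ℝ^n` of a full binary tree `t` with `n+1` leaves. -/
def lodayVec (t : BTree) (n : ℕ) : Fin n → ℝ :=
  fun i => ((t.loday.getD i 0 : ℕ) : ℝ)

/-- The vector `(σ(1), …, σ(n)) ∈ ℝ^n` of a permutation of `{1, …, n}`
(a permutation of `Fin n` with values shifted by one so that they lie in `{1, …, n}`). -/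
def permVec {n : ℕ} (σ : Equiv.Perm (Fin n)) : Fin n → ℝ :=
  fun i => ((σ i : ℕ) + 1 : ℝ)

/-! ### Auxiliary material -/

/-- Snake (caterpillar) trees parametrized by a list of booleans. -/
def snake : List Bool → BTree
  | [] => .node .leaf .leaf
  | b :: bs => if b then .node (snake bs) .leaf else .node .leaf (snake bs)

lemma BTree.leaves_pos (t : BTree) : 1 ≤ t.leaves := by
  induction t with
  | leaf => simp [BTree.leaves]
  | node l r ihl ihr => simp only [BTree.leaves]; omega

lemma BTree.eq_leaf_of_leaves_eq_one {t : BTree} (h : t.leaves = 1) : t = .leaf := by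
  cases t with
  | leaf => rfl
  | node l r =>
    have h1 := l.leaves_pos
    have h2 := r.leaves_pos
    simp only [BTree.leaves] at h
    omega

lemma BTree.loday_length (t : BTree) : t.loday.length = t.leaves - 1 := by
  induction t with
  | leaf => rfl
  | node l r ihl ihr =>
    have h1 := l.leaves_pos
    have h2 := r.leaves_pos
    simp only [BTree.loday, BTree.leaves, List.length_append, List.length_cons, ihl, ihr]
    omega

lemma snake_leaves (bs : List Bool) : (snake bs).leaves = bs.length + 2 := by
  induction bs with
  | nil => rfl
  | cons b bs ih =>
    cases b <;> simp only [snake, if_true, if_false, Bool.false_eq_true,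
      BTree.leaves, ih, List.length_cons] <;> omega

lemma snake_loday_perm (bs : List Bool) :
    (snake bs).loday.Perm (List.range' 1 (bs.length + 1)) := by
  induction bs with
  | nil => simp [snake, BTree.loday, BTree.leaves, List.range']
  | cons b bs ih =>
    have hcat : List.range' 1 (bs.length + 1 + 1) =
        List.range' 1 (bs.length + 1) ++ [bs.length + 2] := by
      rw [List.range'_concat]
      norm_num
      omega
    cases b
    · -- node leaf (snake bs)
      have : (snake (false :: bs)).loday = (bs.length + 2) :: (snake bs).loday := by
        simp [snake, BTree.loday, BTree.leaves, snake_leaves]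
      rw [this, List.length_cons, hcat]
      exact ((ih.cons (bs.length + 2)).trans
        (List.perm_append_singleton (bs.length + 2) (List.range' 1 (bs.length + 1))).symm)
    · -- node (snake bs) leaf
      have : (snake (true :: bs)).loday = (snake bs).loday ++ [bs.length + 2] := by
        simp [snake, BTree.loday, BTree.leaves, snake_leaves]
      rw [this, List.length_cons, hcat]
      exact ih.append_right _

lemma snake_loday_le {bs : List Bool} {x : ℕ} (hx : x ∈ (snake bs).loday) :
    1 ≤ x ∧ x ≤ bs.length + 1 := by
  have := (snake_loday_perm bs).mem_iff.mp hx
  rw [List.mem_range'] at this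
  obtain ⟨i, hi, rfl⟩ := this
  omega

lemma snake_loday_inj : ∀ (bs bs' : List Bool),
    (snake bs).loday = (snake bs').loday → bs = bs' := by
  intro bs
  induction bs with
  | nil =>
    intro bs' h
    cases bs' with
    | nil => rfl
    | cons b' bs' =>
      have h1 := congrArg List.length h
      rw [BTree.loday_length, BTree.loday_length, snake_leaves, snake_leaves] at h1
      simp at h1
  | cons b bs ih =>
    intro bs' h
    cases bs' with
    | nil =>
      have h1 := congrArg List.length h
      rw [BTree.loday_length, BTree.loday_length, snake_leaves, snake_leaves] at h1
      simp at h1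
    | cons b' bs' =>
      have hlen : bs.length = bs'.length := by
        have h1 := congrArg List.length h
        rw [BTree.loday_length, BTree.loday_length, snake_leaves, snake_leaves] at h1
        simpa using h1
      have hL : (snake (true :: bs)).loday = (snake bs).loday ++ [bs.length + 2] := by
        simp [snake, BTree.loday, BTree.leaves, snake_leaves]
      have hR : (snake (false :: bs)).loday = (bs.length + 2) :: (snake bs).loday := by
        simp [snake, BTree.loday, BTree.leaves, snake_leaves]
      have hL' : (snake (true :: bs')).loday = (snake bs').loday ++ [bs'.length + 2] := by
        simp [snake, BTree.loday, BTree.leaves, snake_leaves]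
      have hR' : (snake (false :: bs')).loday = (bs'.length + 2) :: (snake bs').loday := by
        simp [snake, BTree.loday, BTree.leaves, snake_leaves]
      have hlen0 : 0 < (snake bs).loday.length := by
        rw [BTree.loday_length, snake_leaves]; omega
      have hlen0' : 0 < (snake bs').loday.length := by
        rw [BTree.loday_length, snake_leaves]; omega
      cases b <;> cases b'
      · -- false false
        rw [hR, hR'] at h
        rw [ih bs' (List.tail_eq_of_cons_eq h)]
      · -- false true : (len+2) :: L = L' ++ [len'+2]
        exfalso
        rw [hR, hL'] at h
        have h0 := congrArg (fun L => L.getD 0 0) h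
        simp only [List.getD_cons_zero] at h0
        rw [List.getD_append _ _ _ 0 hlen0'] at h0
        have hmem : ((snake bs').loday).getD 0 0 ∈ (snake bs').loday := by
          rw [List.getD_eq_getElem?_getD, List.getElem?_eq_getElem hlen0', Option.getD_some]
          exact List.getElem_mem _
        have := (snake_loday_le hmem).2
        omega
      · -- true false
        exfalso
        rw [hL, hR'] at h
        have h0 := congrArg (fun L => L.getD 0 0) h
        simp only [List.getD_cons_zero] at h0
        rw [List.getD_append _ _ _ 0 hlen0] at h0
        have hmem : ((snake bs).loday).getD 0 0 ∈ (snake bs).loday := by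
          rw [List.getD_eq_getElem?_getD, List.getElem?_eq_getElem hlen0, Option.getD_some]
          exact List.getElem_mem _
        have := (snake_loday_le hmem).2
        omega
      · -- true true
        rw [hL, hL', hlen] at h
        have := List.append_inj_left' h (by simp)
        rw [ih bs' this]

/-- Structure theorem: a tree whose Loday list is a permutation of `1..n` is a snake. -/
lemma exists_snake : ∀ (t : BTree), 2 ≤ t.leaves →
    t.loday.Perm (List.range' 1 t.loday.length) → ∃ bs, t = snake bs := by
  intro t
  induction t with
  | leaf => intro h; simp [BTree.leaves] at h
  | node l r ihl ihr =>
    intro _ hperm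
    have ha := l.leaves_pos
    have hb := r.leaves_pos
    set a := l.leaves with haa
    set b := r.leaves with hbb
    have hlen : (BTree.node l r).loday.length = a + b - 1 := by
      rw [BTree.loday_length]; simp [BTree.leaves]; rfl
    have hmemw : a * b ∈ (BTree.node l r).loday := by
      simp [BTree.loday]; exact Or.inr (Or.inl rfl)
    have hwle : a * b ≤ a + b - 1 := by
      have := hperm.mem_iff.mp hmemw
      rw [List.mem_range'] at this
      obtain ⟨i, hi, heq⟩ := this
      omega
    have hab : a = 1 ∨ b = 1 := by
      by_contra hc
      push_neg at hc
      have h2a : 2 ≤ a := by omega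
      have h2b : 2 ≤ b := by omega
      have := Nat.add_le_mul h2a h2b
      omega
    rcases hab with h1 | h1
    · -- a = 1 : left child is a leaf
      have hl : l = .leaf := BTree.eq_leaf_of_leaves_eq_one (haa ▸ h1)
      by_cases hb1 : b = 1
      · have hr : r = .leaf := BTree.eq_leaf_of_leaves_eq_one (hbb ▸ hb1)
        exact ⟨[], by rw [hl, hr]; rfl⟩
      · have h2b : 2 ≤ b := by omega
        have hldy : (BTree.node l r).loday = b :: r.loday := by
          rw [hl]; simp [BTree.loday, BTree.leaves, ← hbb, h1]
        have hrlen : r.loday.length = b - 1 := by rw [BTree.loday_length]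
        have hcat : List.range' 1 (b - 1 + 1) = List.range' 1 (b - 1) ++ [b] := by
          rw [List.range'_concat]; norm_num; omega
        have hperm' : (b :: r.loday).Perm (List.range' 1 (b - 1) ++ [b]) := by
          rw [← hcat]
          have : (BTree.node l r).loday.length = b - 1 + 1 := by rw [hlen]; omega
          rw [← this, ← hldy]
          exact hperm
        have hrperm : r.loday.Perm (List.range' 1 (b - 1)) := by
          rw [← Multiset.coe_eq_coe]
          have hm := Multiset.coe_eq_coe.mpr hperm'
          have hm1 : (↑(b :: r.loday) : Multiset ℕ) = b ::ₘ ↑r.loday := rfl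
          have hm2 : (↑(List.range' 1 (b - 1) ++ [b]) : Multiset ℕ) =
              b ::ₘ ↑(List.range' 1 (b - 1)) := by
            rw [← Multiset.coe_add]
            show (↑(List.range' 1 (b-1)) + {b} : Multiset ℕ) = _
            rw [add_comm, Multiset.singleton_add]
          rw [hm1, hm2] at hm
          exact (Multiset.cons_inj_right b).mp hm
        obtain ⟨bs, hbs⟩ := ihr (by omega) (by rw [hrlen]; exact hrperm)
        refine ⟨false :: bs, ?_⟩
        rw [hl, hbs]
        simp [snake]
    · -- b = 1 : right child is a leaf
      have hr : r = .leaf := BTree.eq_leaf_of_leaves_eq_one (hbb ▸ h1)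
      by_cases ha1 : a = 1
      · have hl : l = .leaf := BTree.eq_leaf_of_leaves_eq_one (haa ▸ ha1)
        exact ⟨[], by rw [hl, hr]; rfl⟩
      · have h2a : 2 ≤ a := by omega
        have hldy : (BTree.node l r).loday = l.loday ++ [a] := by
          rw [hr]; simp [BTree.loday, BTree.leaves, ← haa, h1]
        have hllen : l.loday.length = a - 1 := by rw [BTree.loday_length]
        have hcat : List.range' 1 (a - 1 + 1) = List.range' 1 (a - 1) ++ [a] := by
          rw [List.range'_concat]; norm_num; omega
        have hperm' : (l.loday ++ [a]).Perm (List.range' 1 (a - 1) ++ [a]) := by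
          rw [← hcat]
          have : (BTree.node l r).loday.length = a - 1 + 1 := by rw [hlen]; omega
          rw [← this, ← hldy]
          exact hperm
        have hlperm : l.loday.Perm (List.range' 1 (a - 1)) := by
          rw [← Multiset.coe_eq_coe]
          have hm := Multiset.coe_eq_coe.mpr hperm'
          rw [← Multiset.coe_add, ← Multiset.coe_add] at hm
          exact add_right_cancel hm
        obtain ⟨bs, hbs⟩ := ihl (by omega) (by rw [hllen]; exact hlperm)
        refine ⟨true :: bs, ?_⟩
        rw [hr, hbs]
        simp [snake]

lemma ofFn_val_add_one (n : ℕ) :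
    (List.ofFn fun i : Fin n => (i : ℕ) + 1) = List.range' 1 n := by
  apply List.ext_getElem
  · simp
  · intro i h1 h2
    simp only [List.getElem_ofFn, List.getElem_range']
    omega

/-- For `n ≥ 1`, the number of vectors `v ∈ ℝ^n` that are simultaneously
the vector of a permutation of `{1, …, n}` and the Loday vector of some full binary tree
with `n+1` leaves equals `2 ^ (n - 1)`. -/
theorem card_perm_inter_loday (n : ℕ) (hn : 1 ≤ n) :
    Set.ncard {v : Fin n → ℝ |
        (∃ σ : Equiv.Perm (Fin n), v = permVec σ) ∧
        (∃ t : BTree, t.leaves = n + 1 ∧ v = lodayVec t n)} = 2 ^ (n - 1) := by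
  set g : List.Vector Bool (n - 1) → (Fin n → ℝ) :=
    fun w => lodayVec (snake w.toList) n with hg
  have hsnlen : ∀ w : List.Vector Bool (n - 1), (snake w.toList).loday.length = n := by
    intro w
    rw [BTree.loday_length, snake_leaves, w.toList_length]
    omega
  have hinj : Function.Injective g := by
    intro w w' h
    have hLeq : (snake w.toList).loday = (snake w'.toList).loday := by
      apply List.ext_getElem (by rw [hsnlen, hsnlen])
      intro i hi hi'
      have hfun := congrFun h ⟨i, by rwa [hsnlen] at hi⟩
      simp only [hg, lodayVec] at hfun
      have := Nat.cast_inj (R := ℝ) |>.mp hfun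
      rwa [List.getD_eq_getElem?_getD, List.getD_eq_getElem?_getD,
        List.getElem?_eq_getElem hi, List.getElem?_eq_getElem hi',
        Option.getD_some, Option.getD_some] at this
    have := snake_loday_inj _ _ hLeq
    exact List.Vector.toList_injective this
  have hrange : {v : Fin n → ℝ |
        (∃ σ : Equiv.Perm (Fin n), v = permVec σ) ∧
        (∃ t : BTree, t.leaves = n + 1 ∧ v = lodayVec t n)} = Set.range g := by
    ext v
    constructor
    · rintro ⟨⟨σ, rfl⟩, ⟨t, ht, hv⟩⟩
      have htlen : t.loday.length = n := by rw [BTree.loday_length, ht]; omega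
      -- the loday list of t is exactly (σ · + 1)
      have hlist : t.loday = List.ofFn fun i : Fin n => (σ i : ℕ) + 1 := by
        apply List.ext_getElem (by simp [htlen])
        intro i hi hi'
        have hfun := congrFun hv ⟨i, by omega⟩
        simp only [permVec, lodayVec] at hfun
        have : ((σ ⟨i, by omega⟩ : ℕ) + 1 : ℝ) = ((t.loday.getD i 0 : ℕ) : ℝ) := by
          exact_mod_cast hfun
        have h2 : (σ ⟨i, by omega⟩ : ℕ) + 1 = t.loday.getD i 0 := by exact_mod_cast this
        rw [List.getD_eq_getElem?_getD, List.getElem?_eq_getElem hi, Option.getD_some] at h2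
        rw [← h2, List.getElem_ofFn]
      have hperm : t.loday.Perm (List.range' 1 t.loday.length) := by
        rw [hlist]
        simp only [List.length_ofFn]
        rw [← ofFn_val_add_one n]
        exact Equiv.Perm.ofFn_comp_perm σ (fun i : Fin n => (i : ℕ) + 1)
      obtain ⟨bs, rfl⟩ := exists_snake t (by omega) hperm
      have hbslen : bs.length = n - 1 := by
        have := snake_leaves bs
        omega
      exact ⟨⟨bs, hbslen⟩, hv.symm⟩
    · rintro ⟨w, rfl⟩
      set L := (snake w.toList).loday with hLdef
      have hLlen : L.length = n := hsnlen w
      have hLperm : L.Perm (List.range' 1 n) := by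
        have := snake_loday_perm w.toList
        rwa [w.toList_length, Nat.sub_add_cancel hn] at this
      have hLnodup : L.Nodup := hLperm.nodup_iff.mpr (List.nodup_range' (s := 1) (n := n))
      have hLmem : ∀ i : Fin n, 1 ≤ L[(i : ℕ)]'(by omega) ∧ L[(i : ℕ)]'(by omega) ≤ n := by
        intro i
        have hm : L[(i : ℕ)]'(by omega) ∈ L := List.getElem_mem _
        have := hLperm.mem_iff.mp hm
        rw [List.mem_range'] at this
        obtain ⟨j, hj, heq⟩ := this
        omega
      set f : Fin n → Fin n := fun i => ⟨L[(i : ℕ)]'(by omega) - 1, by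
        have := hLmem i; omega⟩ with hf
      have hfinj : Function.Injective f := by
        intro i j hij
        have h1 := hLmem i
        have h2 := hLmem j
        have : L[(i : ℕ)]'(by omega) = L[(j : ℕ)]'(by omega) := by
          have := congrArg Fin.val hij
          simp only [hf] at this
          omega
        have := (List.Nodup.getElem_inj_iff hLnodup).mp this
        exact Fin.ext this
      have hfbij : Function.Bijective f := (Finite.injective_iff_bijective).mp hfinj
      refine ⟨⟨Equiv.ofBijective f hfbij, ?_⟩, ⟨snake w.toList, ?_, rfl⟩⟩
      · funext i
        simp only [permVec, Equiv.ofBijective_apply, hf, hg, lodayVec]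
        have := hLmem i
        have hgd : L.getD (i : ℕ) 0 = L[(i : ℕ)]'(by omega) := by
          rw [List.getD_eq_getElem?_getD, List.getElem?_eq_getElem (by omega), Option.getD_some]
        rw [← hLdef, hgd]
        have h1 := (hLmem i).1
        have h2 : L[(i : ℕ)]'(by omega) - 1 + 1 = L[(i : ℕ)]'(by omega) :=
          Nat.succ_pred_eq_of_pos h1
        exact_mod_cast h2.symm
      · rw [snake_leaves, w.toList_length]
        omega
  rw [hrange, ← Set.image_univ, Set.ncard_image_of_injective _ hinj, Set.ncard_univ,
    Nat.card_eq_fintype_card, card_vector, Fintype.card_bool]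
end

section
/- For every n ≥ 1, the number of permutations of {1,…,n} that avoid both patterns 132 and 231 equals 2^{n−1}. -/
/-- A sequence `f` avoids the pattern `132` if there are no positions `p < q < r`
with `f p < f r < f q`. -/
def Avoids132 {n : ℕ} {α : Type*} [LinearOrder α] (f : Fin n → α) : Prop :=
  ¬ ∃ p q r : Fin n, p < q ∧ q < r ∧ f p < f r ∧ f r < f q

/-- A sequence `f` avoids the pattern `231` if there are no positions `p < q < r`
with `f r < f p < f q`. -/
def Avoids231 {n : ℕ} {α : Type*} [LinearOrder α] (f : Fin n → α) : Prop :=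
  ¬ ∃ p q r : Fin n, p < q ∧ q < r ∧ f r < f p ∧ f p < f q

section Valley

variable {m : ℕ}

/-- `σ` has no "peak": no position strictly between a smaller value to its left
and a smaller value to its right, both below it. -/
def NoPeak (σ : Equiv.Perm (Fin (m + 1))) : Prop :=
  ∀ p q r : Fin (m + 1), p < q → q < r → σ p < σ q → σ r < σ q → False

lemma avoids_iff_noPeak (σ : Equiv.Perm (Fin (m + 1))) :
    (Avoids132 ⇑σ ∧ Avoids231 ⇑σ) ↔ NoPeak σ := by
  constructor
  · rintro ⟨h1, h2⟩ p q r hpq hqr hp hr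
    rcases lt_trichotomy (σ p) (σ r) with h | h | h
    · exact h1 ⟨p, q, r, hpq, hqr, h, hr⟩
    · exact absurd (σ.injective h) (ne_of_lt (hpq.trans hqr))
    · exact h2 ⟨p, q, r, hpq, hqr, h, hp⟩
  · intro h
    constructor
    · rintro ⟨p, q, r, hpq, hqr, h1, h2⟩
      exact h p q r hpq hqr (h1.trans h2) h2
    · rintro ⟨p, q, r, hpq, hqr, h1, h2⟩
      exact h p q r hpq hqr h2 (h1.trans h2)

lemma apply_ne_zero {σ : Equiv.Perm (Fin (m + 1))} {i : Fin (m + 1)}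
    (hi : i ≠ σ.symm 0) : σ i ≠ 0 := by
  intro h0
  exact hi ((Equiv.eq_symm_apply σ).mpr h0)

lemma noPeak_left {σ : Equiv.Perm (Fin (m + 1))} (h : NoPeak σ) {i j : Fin (m + 1)}
    (hij : i < j) (hj : j ≤ σ.symm 0) : σ j < σ i := by
  rcases eq_or_lt_of_le hj with rfl | hj'
  · rw [σ.apply_symm_apply]
    exact Fin.pos_of_ne_zero (apply_ne_zero (ne_of_lt hij))
  · by_contra hc
    push_neg at hc
    have hne : σ i ≠ σ j := fun hh => absurd (σ.injective hh) (ne_of_lt hij)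
    have h1 : σ i < σ j := lt_of_le_of_ne hc hne
    have h2 : σ (σ.symm 0) < σ j := by
      rw [σ.apply_symm_apply]
      exact Fin.pos_of_ne_zero (apply_ne_zero (ne_of_lt hj'))
    exact h i j (σ.symm 0) hij hj' h1 h2

lemma noPeak_right {σ : Equiv.Perm (Fin (m + 1))} (h : NoPeak σ) {i j : Fin (m + 1)}
    (hi : σ.symm 0 ≤ i) (hij : i < j) : σ i < σ j := by
  rcases eq_or_lt_of_le hi with rfl | hi'
  · rw [σ.apply_symm_apply]
    exact Fin.pos_of_ne_zero (apply_ne_zero (ne_of_gt hij))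
  · by_contra hc
    push_neg at hc
    have hne : σ j ≠ σ i := fun hh => absurd (σ.injective hh) (ne_of_gt hij)
    have h1 : σ j < σ i := lt_of_le_of_ne hc hne
    have h2 : σ (σ.symm 0) < σ i := by
      rw [σ.apply_symm_apply]
      exact Fin.pos_of_ne_zero (apply_ne_zero (ne_of_gt hi'))
    exact h (σ.symm 0) i j hi' hij h2 h1

lemma card_compl' (L : Finset (Fin (m + 1))) : Lᶜ.card = (m + 1) - L.card := by
  simp [Finset.card_compl]

/-- The canonical "valley" function built from a set `L` of values placed (in
decreasing order) to the left of the minimum; the remaining values are placed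
in increasing order afterwards. -/
def vFun (L : Finset (Fin (m + 1))) : Fin (m + 1) → Fin (m + 1) := fun i =>
  if h : (i : ℕ) < L.card then
    L.orderEmbOfFin rfl ⟨L.card - 1 - (i : ℕ), by omega⟩
  else
    Lᶜ.orderEmbOfFin (card_compl' L) ⟨(i : ℕ) - L.card, by
      have := i.isLt; omega⟩

lemma vFun_mem_left {L : Finset (Fin (m + 1))} {i : Fin (m + 1)}
    (h : (i : ℕ) < L.card) : vFun L i ∈ L := by
  rw [vFun, dif_pos h]
  exact Finset.orderEmbOfFin_mem _ _ _

lemma vFun_mem_right {L : Finset (Fin (m + 1))} {i : Fin (m + 1)}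
    (h : ¬ (i : ℕ) < L.card) : vFun L i ∈ Lᶜ := by
  rw [vFun, dif_neg h]
  exact Finset.orderEmbOfFin_mem _ _ _

lemma vFun_inj (L : Finset (Fin (m + 1))) : Function.Injective (vFun L) := by
  intro i j hij
  by_cases hi : (i : ℕ) < L.card <;> by_cases hj : (j : ℕ) < L.card
  · rw [vFun, vFun, dif_pos hi, dif_pos hj] at hij
    have := (L.orderEmbOfFin rfl).injective hij
    have h2 : L.card - 1 - (i : ℕ) = L.card - 1 - (j : ℕ) := congrArg Fin.val this
    exact Fin.ext (by omega)
  · have h1 := vFun_mem_left hi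
    have h2 := vFun_mem_right hj
    rw [hij] at h1
    exact absurd h1 (Finset.mem_compl.mp h2)
  · have h1 := vFun_mem_right hi
    have h2 := vFun_mem_left hj
    rw [hij] at h1
    exact absurd h2 (Finset.mem_compl.mp h1)
  · rw [vFun, vFun, dif_neg hi, dif_neg hj] at hij
    have := (Lᶜ.orderEmbOfFin (card_compl' L)).injective hij
    have h2 : (i : ℕ) - L.card = (j : ℕ) - L.card := congrArg Fin.val this
    exact Fin.ext (by omega)

/-- The canonical valley permutation associated to `L`. -/
noncomputable def vPerm (L : Finset (Fin (m + 1))) : Equiv.Perm (Fin (m + 1)) :=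
  Equiv.ofBijective (vFun L) (Finite.injective_iff_bijective.mp (vFun_inj L))

@[simp] lemma vPerm_apply (L : Finset (Fin (m + 1))) (i : Fin (m + 1)) :
    vPerm L i = vFun L i := rfl

lemma vFun_left_anti {L : Finset (Fin (m + 1))} {i j : Fin (m + 1)}
    (hij : i < j) (hj : (j : ℕ) < L.card) : vFun L j < vFun L i := by
  have hi : (i : ℕ) < L.card := lt_trans hij hj
  rw [vFun, vFun, dif_pos hi, dif_pos hj]
  exact (L.orderEmbOfFin rfl).strictMono (by
    simp only [Fin.mk_lt_mk]
    have : (i : ℕ) < (j : ℕ) := hij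
    omega)

lemma vFun_right_mono {L : Finset (Fin (m + 1))} {i j : Fin (m + 1)}
    (hi : ¬ (i : ℕ) < L.card) (hij : i < j) : vFun L i < vFun L j := by
  have hj : ¬ (j : ℕ) < L.card := by
    have : (i : ℕ) < (j : ℕ) := hij
    omega
  rw [vFun, vFun, dif_neg hi, dif_neg hj]
  exact (Lᶜ.orderEmbOfFin (card_compl' L)).strictMono (by
    simp only [Fin.mk_lt_mk]
    have : (i : ℕ) < (j : ℕ) := hij
    omega)

lemma vPerm_noPeak (L : Finset (Fin (m + 1))) : NoPeak (vPerm L) := by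
  intro p q r hpq hqr h1 h2
  by_cases hq : (q : ℕ) < L.card
  · exact absurd h1 (not_lt.mpr (le_of_lt (vFun_left_anti hpq hq)))
  · exact absurd h2 (not_lt.mpr (le_of_lt (vFun_right_mono hq hqr)))

lemma card_le_of_not_mem {L : Finset (Fin (m + 1))} (hL : (0 : Fin (m + 1)) ∉ L) :
    L.card ≤ m := by
  have hsub : L ⊆ Finset.univ.erase 0 := fun x hx =>
    Finset.mem_erase.mpr ⟨fun h => hL (h ▸ hx), Finset.mem_univ x⟩
  have := Finset.card_le_card hsub
  simpa [Finset.card_erase_of_mem] using this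

lemma vFun_valley {L : Finset (Fin (m + 1))} (hL : (0 : Fin (m + 1)) ∉ L) :
    vFun L ⟨L.card, by have := card_le_of_not_mem hL; omega⟩ = 0 := by
  have h0 : (0 : Fin (m + 1)) ∈ Lᶜ := Finset.mem_compl.mpr hL
  have hpos : 0 < Lᶜ.card := Finset.card_pos.mpr ⟨0, h0⟩
  rw [vFun, dif_neg (by simp)]
  have hidx : (⟨(L.card : ℕ) - L.card, by have := card_le_of_not_mem hL; omega⟩ :
      Fin ((m + 1) - L.card)) = ⟨0, by rw [← card_compl' L]; exact hpos⟩ :=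
    Fin.ext (Nat.sub_self _)
  rw [hidx, Finset.orderEmbOfFin_zero (card_compl' L)]
  exact le_antisymm (Finset.min'_le _ 0 h0) (Fin.zero_le _)

lemma classify {σ : Equiv.Perm (Fin (m + 1))} (h : NoPeak σ) :
    σ = vPerm ((Finset.Iio (σ.symm 0)).image σ) := by
  set p₀ := σ.symm 0 with hp₀
  set L := (Finset.Iio p₀).image σ with hLdef
  have hcard : L.card = (p₀ : ℕ) := by
    rw [hLdef, Finset.card_image_of_injective _ σ.injective, Fin.card_Iio]
  apply Equiv.ext
  intro i
  show σ i = vFun L i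
  by_cases hi : (i : ℕ) < L.card
  · -- left, decreasing part
    set f : Fin L.card → Fin (m + 1) := fun k =>
      σ ⟨(p₀ : ℕ) - 1 - (k : ℕ), by have := p₀.isLt; omega⟩ with hf
    have hmem : ∀ k, f k ∈ L := by
      intro k
      have hk := k.isLt
      refine Finset.mem_image.mpr ⟨⟨(p₀ : ℕ) - 1 - (k : ℕ), by have := p₀.isLt; omega⟩,
        Finset.mem_Iio.mpr ?_, rfl⟩
      show ((p₀ : ℕ) - 1 - (k : ℕ)) < (p₀ : ℕ)
      omega
    have hmono : StrictMono f := by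
      intro a b hab
      have ha := a.isLt; have hb := b.isLt
      apply noPeak_left h
      · show ((p₀ : ℕ) - 1 - (b : ℕ)) < ((p₀ : ℕ) - 1 - (a : ℕ))
        have : (a : ℕ) < (b : ℕ) := hab
        omega
      · show ((p₀ : ℕ) - 1 - (a : ℕ)) ≤ (p₀ : ℕ)
        omega
    have huniq := Finset.orderEmbOfFin_unique (rfl : L.card = L.card) hmem hmono
    rw [vFun, dif_pos hi, ← huniq]
    show σ i = σ _
    congr 1
    apply Fin.ext
    show (i : ℕ) = (p₀ : ℕ) - 1 - (L.card - 1 - (i : ℕ))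
    omega
  · -- right, increasing part
    set g : Fin ((m + 1) - L.card) → Fin (m + 1) := fun k =>
      σ ⟨(p₀ : ℕ) + (k : ℕ), by have := k.isLt; omega⟩ with hg
    have hmem : ∀ k, g k ∈ Lᶜ := by
      intro k
      refine Finset.mem_compl.mpr ?_
      intro hmem'
      obtain ⟨j, hj, hj'⟩ := Finset.mem_image.mp hmem'
      have hje : j = ⟨(p₀ : ℕ) + (k : ℕ), by have := k.isLt; omega⟩ := σ.injective hj'
      have hjlt : j < p₀ := Finset.mem_Iio.mp hj
      rw [hje, Fin.lt_def] at hjlt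
      simp at hjlt
    have hmono : StrictMono g := by
      intro a b hab
      apply noPeak_right h
      · show (p₀ : ℕ) ≤ (p₀ : ℕ) + (a : ℕ)
        omega
      · show (p₀ : ℕ) + (a : ℕ) < (p₀ : ℕ) + (b : ℕ)
        have : (a : ℕ) < (b : ℕ) := hab
        omega
    have huniq := Finset.orderEmbOfFin_unique (card_compl' L) hmem hmono
    rw [vFun, dif_neg hi, ← huniq]
    show σ i = σ _
    congr 1
    apply Fin.ext
    show (i : ℕ) = (p₀ : ℕ) + ((i : ℕ) - L.card)
    have := i.isLt
    omega

/-- The equivalence between no-peak permutations and subsets of nonzero values. -/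
noncomputable def theEquiv :
    {σ : Equiv.Perm (Fin (m + 1)) // NoPeak σ} ≃
      {L : Finset (Fin (m + 1)) // (0 : Fin (m + 1)) ∉ L} where
  toFun σ := ⟨(Finset.Iio (σ.1.symm 0)).image σ.1, by
    intro hmem
    obtain ⟨j, hj, hj'⟩ := Finset.mem_image.mp hmem
    have : j = σ.1.symm 0 := (Equiv.eq_symm_apply σ.1).mpr hj'
    rw [this] at hj
    exact absurd (Finset.mem_Iio.mp hj) (lt_irrefl _)⟩
  invFun L := ⟨vPerm L.1, vPerm_noPeak L.1⟩
  left_inv σ := Subtype.ext (classify σ.2).symm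
  right_inv L := by
    apply Subtype.ext
    show (Finset.Iio ((vPerm L.1).symm 0)).image (vPerm L.1) = L.1
    have hsymm : (vPerm L.1).symm 0 =
        ⟨L.1.card, by have := card_le_of_not_mem L.2; omega⟩ :=
      (Equiv.symm_apply_eq _).mpr (vFun_valley L.2).symm
    rw [hsymm]
    apply Finset.eq_of_subset_of_card_le
    · intro x hx
      obtain ⟨j, hj, hj'⟩ := Finset.mem_image.mp hx
      have hjlt' : j < ⟨L.1.card, by have := card_le_of_not_mem L.2; omega⟩ :=
        Finset.mem_Iio.mp hj
      have hjlt : (j : ℕ) < L.1.card := hjlt'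
      rw [← hj']
      exact vFun_mem_left hjlt
    · rw [Finset.card_image_of_injective _ (vPerm L.1).injective, Fin.card_Iio]

end Valley

/-- For `n ≥ 1`, the number of permutations of `{1, …, n}` avoiding both
patterns 132 and 231 equals `2 ^ (n - 1)`. -/
theorem card_avoiding_perms (n : ℕ) (hn : 1 ≤ n) :
    Set.ncard {σ : Equiv.Perm (Fin n) | Avoids132 ⇑σ ∧ Avoids231 ⇑σ} = 2 ^ (n - 1) := by
  obtain ⟨m, rfl⟩ : ∃ m, n = m + 1 := ⟨n - 1, by omega⟩
  have hset : {σ : Equiv.Perm (Fin (m + 1)) | Avoids132 ⇑σ ∧ Avoids231 ⇑σ} =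
      {σ : Equiv.Perm (Fin (m + 1)) | NoPeak σ} := by
    ext σ
    exact avoids_iff_noPeak σ
  rw [hset, ← Nat.card_coe_set_eq]
  have h1 : Nat.card {σ : Equiv.Perm (Fin (m + 1)) // NoPeak σ} =
      Nat.card {L : Finset (Fin (m + 1)) // (0 : Fin (m + 1)) ∉ L} :=
    Nat.card_congr theEquiv
  have h2 : Nat.card {L : Finset (Fin (m + 1)) // (0 : Fin (m + 1)) ∉ L} = 2 ^ m := by
    rw [Nat.card_eq_fintype_card, Fintype.card_subtype]
    have hfilter : Finset.univ.filter (fun L : Finset (Fin (m + 1)) => 0 ∉ L) =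
        (Finset.univ.erase (0 : Fin (m + 1))).powerset := by
      ext L
      simp [Finset.subset_erase, Finset.subset_univ]
    rw [hfilter, Finset.card_powerset]
    simp [Finset.card_erase_of_mem]
  have h3 : Nat.card {σ : Equiv.Perm (Fin (m + 1)) // NoPeak σ} = 2 ^ m := h1.trans h2
  have h4 := (Nat.card_coe_set_eq {σ : Equiv.Perm (Fin (m + 1)) | NoPeak σ}).symm.trans h3
  simpa using h4
end
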